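/- Let the n-th cumulant of the negative binomial distribution with parameters r and λ be η(n) = ∑_{m=1}^{n} r·(m-1)!·S(n,m)·λ^m (where S(n,m) are Stirling numbers of the second kind), and let the n-th cumulant of the matched shifted-gamma distribution be γ(1) = rλ and γ(n) = (n-1)!·r·λ(1+λ)(1/2+λ)^{n-2} for n > 1. Define scaled cumulants γ̄(n) = (2^n/r)γ(n) and η̄(n) = (2^n/r)η(n). Then for all n ≥ 0, η̄(n+1) = ∑_{i=0}^{n} Θ(n,i)·γ̄(i+1) and γ̄(n+1) = ∑_{i=0}^{n} θ(n,i)·η̄(i+1), as identities of polynomials in λ, where Θ(n,i) and θ(n,i) are the tanh and arctanh numbers defined by (1/i!)tanh(u)^i = ∑_n Θ(n,i)u^n/n! and (1/i!)arctanh(u)^i = ∑_n θ(n,i)u^n/n!. -/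

import Mathlib

/-!
The scaled cumulants do not depend on `r`. With `H(u) = ∑ η̄(n+1) uⁿ/n!` and
`G(u) = ∑ γ̄(n+1) uⁿ/n!`, the recurrence `S(n+1, j+1) = ∑ₖ C(n,k) S(k,j)` gives
`H = 2λe^{2u} / (1 + λ - λe^{2u})` (the derivative of the negative binomial cumulant generating
function, taken at `2u`), and the closed form of `γ` gives `G = 2λ(1+u) / (1 - (1+2λ)u)`.
Since `e^{2u} = (1+t)/(1-t)` for `t = tanh u`, `H = G ∘ tanh`. Differentiating shows
`arctanh ∘ tanh = id`, hence also `tanh ∘ arctanh = id` and `G = H ∘ arctanh`. The coefficient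
of `uⁿ/n!` in `G ∘ tanh` is `∑ᵢ Θ(n,i) γ̄(i+1)`, and likewise for `arctanh`.
-/

open PowerSeries Finset

/-- Unsigned Lah numbers: `L(n,m) = (n!/m!) * C(n-1,m-1)` for `n ≥ m ≥ 1`, else `0`. -/
noncomputable def lahN (n m : ℕ) : ℚ :=
  if 1 ≤ m ∧ m ≤ n then (n.factorial : ℚ) / (m.factorial : ℚ) * ((n - 1).choose (m - 1) : ℚ)
  else 0

/-- Unsigned Stirling numbers of the first kind (permutations of `n` with `m` cycles). -/
def stirling1 : ℕ → ℕ → ℕ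
  | 0, 0 => 1
  | 0, _ + 1 => 0
  | _ + 1, 0 => 0
  | n + 1, m + 1 => n * stirling1 n (m + 1) + stirling1 n m

/-- Stirling numbers of the second kind. -/
def stirling2 : ℕ → ℕ → ℕ
  | 0, 0 => 1
  | 0, _ + 1 => 0
  | _ + 1, 0 => 0
  | n + 1, m + 1 => (m + 1) * stirling2 n (m + 1) + stirling2 n m

/-- `tanh` as a formal power series over `ℚ`: `(e^u - e^{-u}) / (e^u + e^{-u})`. -/
noncomputable def tanhS : PowerSeries ℚ :=
  (PowerSeries.exp ℚ - PowerSeries.rescale (-1) (PowerSeries.exp ℚ)) *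
    (PowerSeries.exp ℚ + PowerSeries.rescale (-1) (PowerSeries.exp ℚ))⁻¹

/-- `arctanh u = (1/2) log((1+u)/(1-u)) = ∑_{j≥0} u^{2j+1}/(2j+1)` as a formal power series. -/
noncomputable def arctanhS : PowerSeries ℚ :=
  PowerSeries.mk fun n => if n % 2 = 1 then (1 : ℚ) / n else 0

/-- Tanh numbers `Θ(n,m)`, defined by `(1/m!) tanh(u)^m = ∑_n Θ(n,m) u^n/n!`. -/
noncomputable def ThetaT (n m : ℕ) : ℚ :=
  (n.factorial : ℚ) / (m.factorial : ℚ) * PowerSeries.coeff n (tanhS ^ m)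

/-- Arctanh numbers `θ(n,m)`, defined by `(1/m!) arctanh(u)^m = ∑_n θ(n,m) u^n/n!`. -/
noncomputable def thetaA (n m : ℕ) : ℚ :=
  (n.factorial : ℚ) / (m.factorial : ℚ) * PowerSeries.coeff n (arctanhS ^ m)

/-- The n-th cumulant of the negative binomial distribution with parameters r, λ,
as a polynomial in λ: η(n) = ∑_{m=1}^{n} r (m-1)! S(n,m) λ^m. -/
noncomputable def etaCum (r : ℚ) (n : ℕ) : Polynomial ℚ :=
  ∑ m ∈ Finset.Icc 1 n,
    Polynomial.C (r * ((m - 1).factorial : ℚ) * (stirling2 n m : ℚ)) * Polynomial.X ^ m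

/-- The n-th cumulant of the matched shifted-gamma distribution, as a polynomial in λ:
γ(1) = rλ and γ(n) = (n-1)! r λ(1+λ)(1/2+λ)^{n-2} for n > 1. -/
noncomputable def gammaCum (r : ℚ) (n : ℕ) : Polynomial ℚ :=
  if n = 1 then Polynomial.C r * Polynomial.X
  else
    Polynomial.C (((n - 1).factorial : ℚ) * r) * Polynomial.X * (1 + Polynomial.X) *
      (Polynomial.C (1 / 2) + Polynomial.X) ^ (n - 2)

/-- Scaled cumulant η̄(n) = (2^n/r) η(n). -/
noncomputable def etaBar (r : ℚ) (n : ℕ) : Polynomial ℚ :=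
  Polynomial.C ((2 : ℚ) ^ n / r) * etaCum r n

/-- Scaled cumulant γ̄(n) = (2^n/r) γ(n). -/
noncomputable def gammaBar (r : ℚ) (n : ℕ) : Polynomial ℚ :=
  Polynomial.C ((2 : ℚ) ^ n / r) * gammaCum r n

open scoped Nat Polynomial

theorem stirling2_eq_stirlingSecond : ∀ n m, stirling2 n m = Nat.stirlingSecond n m
  | 0, 0 | 0, _ + 1 | _ + 1, 0 => rfl
  | n + 1, m + 1 => by
    rw [stirling2, Nat.stirlingSecond_succ_succ, stirling2_eq_stirlingSecond n (m + 1),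
      stirling2_eq_stirlingSecond n m]

namespace Nat

theorem sum_range_choose_mul_stirlingSecond (n j : ℕ) :
    ∑ k ∈ range (n + 1), n.choose k * stirlingSecond k j = stirlingSecond (n + 1) (j + 1) := by
  induction n generalizing j with
  | zero => cases j <;> simp [stirlingSecond_succ_succ]
  | succ n ih =>
    have pascal : ∑ k ∈ range (n + 2), (n + 1).choose k * stirlingSecond k j =
        ∑ k ∈ range (n + 1), n.choose k * stirlingSecond k j +
          ∑ k ∈ range (n + 1), n.choose k * stirlingSecond (k + 1) j := by
      rw [sum_range_succ' _ (n + 1), sum_range_succ' (fun k => n.choose k * _)]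
      simp only [choose_succ_succ, add_mul, sum_add_distrib, choose_zero_right]
      rw [sum_range_succ (fun k => n.choose (k + 1) * _), choose_succ_self, zero_mul, add_zero]
      ring
    rw [pascal, ih]
    cases j with
    | zero => simp [stirlingSecond_succ_succ]
    | succ i =>
      simp only [stirlingSecond_succ_succ, mul_add, sum_add_distrib, mul_left_comm _ (i + 1),
        ← mul_sum, ih]
      ring

theorem sum_range_choose_mul_stirlingSecond_succ (n i : ℕ) :
    ∑ k ∈ range (n + 1), n.choose k * stirlingSecond (k + 1) (i + 1) =
      (i + 1) * stirlingSecond (n + 1) (i + 2) + stirlingSecond (n + 1) (i + 1) := by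
  simp only [stirlingSecond_succ_succ, mul_add, sum_add_distrib, mul_left_comm _ (i + 1),
    ← mul_sum, sum_range_choose_mul_stirlingSecond]

end Nat

namespace PowerSeries

section CommSemiring

variable {R S : Type*} [CommSemiring R] [CommSemiring S]

theorem constantCoeff_map (f : R →+* S) (p : R⟦X⟧) :
    constantCoeff (map f p) = f (constantCoeff p) := by
  rw [← coeff_zero_eq_constantCoeff_apply, coeff_map, coeff_zero_eq_constantCoeff_apply]

theorem rescale_C (a b : R) : rescale a (C b) = C b := by
  ext n
  rw [coeff_rescale, coeff_C]
  split_ifs with hn <;> simp [hn]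

end CommSemiring

variable {R A : Type*} [CommRing R] [CommRing A] [Algebra ℚ A]

theorem coeff_pow_eq_zero_of_lt {a : R⟦X⟧} (ha : constantCoeff a = 0) {n i : ℕ}
    (h : n < i) : coeff n (a ^ i) = 0 :=
  X_pow_dvd_iff.mp (pow_dvd_pow_of_dvd (X_dvd_iff.mpr ha) i) n h

theorem coeff_subst_eq_sum_range {a : R⟦X⟧} (ha : constantCoeff a = 0)
    (f : R⟦X⟧) (n : ℕ) :
    coeff n (f.subst a) = ∑ i ∈ range (n + 1), coeff i f * coeff n (a ^ i) := by
  rw [coeff_subst' (HasSubst.of_constantCoeff_zero' ha)]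
  refine finsum_eq_sum_of_support_subset _ fun i hi => ?_
  by_contra hin
  exact hi (by simp [coeff_pow_eq_zero_of_lt ha (by simpa using hin)])

theorem subst_eq_X_of_subst_eq_X {f g : R⟦X⟧} (hg : constantCoeff g = 0)
    (hg₁ : IsUnit (coeff 1 g)) (hfg : f.subst g = X) : g.subst f = X := by
  set h := g.substInvOfIsUnit hg₁
  have hh : HasSubst h := HasSubst.substInvOfIsUnit g hg₁
  have hf : f = h := by
    rw [← X_subst f, ← subst_substInvOfIsUnit_right g hg hg₁,
      ← subst_comp_subst_apply (HasSubst.of_constantCoeff_zero' hg) hh, hfg, subst_X hh]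
  rw [hf, subst_substInvOfIsUnit_right g hg hg₁]

theorem derivative_exp_sq : d⁄dX A (exp A ^ 2) = 2 * exp A ^ 2 := by
  rw [derivative_pow, derivative_exp]
  ring

theorem isUnit_one_add_exp_sq : IsUnit (1 + exp A ^ 2) := by
  rw [isUnit_iff_constantCoeff, map_add, map_one, map_pow, constantCoeff_exp, one_pow,
    one_add_one_eq_two, ← map_ofNat (algebraMap ℚ A)]
  exact (isUnit_of_invertible (2 : ℚ)).map _

end PowerSeries

section Egf

variable {A : Type*} [CommRing A] [Algebra ℚ A]

noncomputable def egf (s : ℕ → A) : A⟦X⟧ :=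
  mk fun n => algebraMap ℚ A (n ! : ℚ)⁻¹ * s n

theorem coeff_egf (s : ℕ → A) (n : ℕ) : coeff n (egf s) = algebraMap ℚ A (n ! : ℚ)⁻¹ * s n :=
  coeff_mk _ _

theorem egf_mul_exp (s : ℕ → A) :
    egf s * exp A = egf fun n => ∑ k ∈ range (n + 1), (n.choose k : A) * s k := by
  ext n
  rw [coeff_mul, Finset.Nat.sum_antidiagonal_eq_sum_range_succ_mk, coeff_egf, mul_sum]
  refine sum_congr rfl fun k hk => ?_
  have hkn : k ≤ n := Nat.lt_succ_iff.mp (mem_range.mp hk)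
  rw [coeff_egf, coeff_exp, ← map_natCast (algebraMap ℚ A), mul_right_comm, ← map_mul,
    ← mul_assoc, ← map_mul, Nat.cast_choose ℚ hkn]
  congr 2
  field_simp

theorem eq_sum_of_egf_eq_subst {s t : ℕ → A} {f : ℚ⟦X⟧} (hf : constantCoeff f = 0)
    (h : egf t = (egf s).subst (map (algebraMap ℚ A) f)) (n : ℕ) :
    t n = ∑ i ∈ range (n + 1), algebraMap ℚ A ((n ! : ℚ) / (i ! : ℚ) * coeff n (f ^ i)) * s i := by
  have hf' : constantCoeff (map (algebraMap ℚ A) f) = 0 := by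
    rw [constantCoeff_map, hf, map_zero]
  have hn := congrArg (coeff n) h
  simp only [coeff_subst_eq_sum_range hf', coeff_egf, ← map_pow, coeff_map] at hn
  calc t n = algebraMap ℚ A (n ! : ℚ) * (algebraMap ℚ A (n ! : ℚ)⁻¹ * t n) := by
        rw [← mul_assoc, ← map_mul, mul_inv_cancel₀ (by positivity), map_one, one_mul]
    _ = _ := by
        rw [hn, mul_sum]
        refine sum_congr rfl fun i _ => ?_
        rw [div_eq_mul_inv, map_mul, map_mul]
        ring

end Egf

theorem tanhS_mul_one_add_exp_sq : tanhS * (1 + exp ℚ ^ 2) = exp ℚ ^ 2 - 1 := by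
  have hinv : exp ℚ * rescale (-1) (exp ℚ) = 1 := exp_mul_exp_neg_eq_one
  have hdiv : tanhS * (exp ℚ + rescale (-1) (exp ℚ)) = exp ℚ - rescale (-1) (exp ℚ) := by
    rw [tanhS, mul_assoc, PowerSeries.inv_mul_cancel]
    · exact mul_one _
    · norm_num [constantCoeff_exp, ← coeff_zero_eq_constantCoeff, coeff_rescale]
  linear_combination exp ℚ * hdiv - (tanhS + 1) * hinv

theorem constantCoeff_tanhS : constantCoeff tanhS = 0 := by
  simpa [constantCoeff_exp] using congrArg constantCoeff tanhS_mul_one_add_exp_sq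

theorem derivative_tanhS : d⁄dX ℚ tanhS = 1 - tanhS ^ 2 := by
  have h := congrArg (d⁄dX ℚ) tanhS_mul_one_add_exp_sq
  simp only [Derivation.leibniz, map_add, map_sub, Derivation.map_one_eq_zero, derivative_exp_sq,
    smul_eq_mul] at h
  refine isUnit_one_add_exp_sq.mul_left_inj.mp ?_
  linear_combination h + (tanhS - 1) * tanhS_mul_one_add_exp_sq

theorem coeff_one_tanhS : coeff 1 tanhS = 1 := by
  simpa [coeff_derivative, constantCoeff_tanhS] using congrArg (coeff 0) derivative_tanhS

theorem constantCoeff_arctanhS : constantCoeff arctanhS = 0 := by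
  simp [arctanhS]

theorem coeff_derivative_arctanhS (m : ℕ) :
    coeff m (d⁄dX ℚ arctanhS) = if Even m then 1 else 0 := by
  rw [coeff_derivative, arctanhS, coeff_mk]
  rcases Nat.even_or_odd m with hm | hm
  · rw [if_pos (Nat.odd_iff.mp hm.add_one), if_pos hm]
    field_simp
    push_cast
    ring
  · have : (m + 1) % 2 = 0 := Nat.even_iff.mp hm.add_one
    rw [if_neg (by omega), if_neg (Nat.not_even_iff_odd.mpr hm), zero_mul]

theorem derivative_arctanhS_mul : d⁄dX ℚ arctanhS * (1 - X ^ 2) = 1 := by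
  ext n
  rw [mul_sub, mul_one, map_sub, coeff_mul_X_pow', coeff_one, coeff_derivative_arctanhS]
  rcases lt_or_ge n 2 with hn | hn
  · interval_cases n <;> simp
  · rw [if_pos hn, coeff_derivative_arctanhS, if_neg (show n ≠ 0 by omega)]
    simp [Nat.even_sub hn]

theorem arctanhS_subst_tanhS : arctanhS.subst tanhS = X := by
  have hT : HasSubst tanhS := HasSubst.of_constantCoeff_zero' constantCoeff_tanhS
  apply derivative.ext
  · have h := congrArg (substAlgHom hT) derivative_arctanhS_mul
    simp only [map_mul, map_sub, map_one, map_pow, substAlgHom_X, coe_substAlgHom] at h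
    rw [derivative_subst hT, derivative_tanhS, h, derivative_X]
  · exact (constantCoeff_subst_eq_zero constantCoeff_tanhS _ constantCoeff_arctanhS).trans
      constantCoeff_X.symm

theorem tanhS_subst_arctanhS : tanhS.subst arctanhS = X :=
  subst_eq_X_of_subst_eq_X constantCoeff_tanhS (by simp [coeff_one_tanhS]) arctanhS_subst_tanhS

section Cumulants

local notation "Λ" => (Polynomial.X : ℚ[X])

theorem etaCum_eq_C_mul (r : ℚ) (n : ℕ) : etaCum r n = Polynomial.C r * etaCum 1 n := by
  simp only [etaCum, mul_sum, one_mul, ← mul_assoc, ← Polynomial.C_mul]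

theorem gammaCum_eq_C_mul (r : ℚ) (n : ℕ) : gammaCum r n = Polynomial.C r * gammaCum 1 n := by
  unfold gammaCum
  split_ifs
  · simp
  · simp only [mul_one, Polynomial.C_mul]
    ring

theorem etaBar_eq_etaBar_one {r : ℚ} (hr : r ≠ 0) (n : ℕ) : etaBar r n = etaBar 1 n := by
  rw [etaBar, etaBar, etaCum_eq_C_mul r, ← mul_assoc, ← Polynomial.C_mul, div_mul_cancel₀ _ hr,
    div_one]

theorem gammaBar_eq_gammaBar_one {r : ℚ} (hr : r ≠ 0) (n : ℕ) : gammaBar r n = gammaBar 1 n := by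
  rw [gammaBar, gammaBar, gammaCum_eq_C_mul r, ← mul_assoc, ← Polynomial.C_mul,
    div_mul_cancel₀ _ hr, div_one]

theorem coeff_etaCum_zero (r : ℚ) (n : ℕ) : (etaCum r n).coeff 0 = 0 := by
  simp [etaCum]

theorem coeff_etaCum_one_succ (n j : ℕ) :
    (etaCum 1 n).coeff (j + 1) = j ! * Nat.stirlingSecond n (j + 1) := by
  simp only [etaCum, Polynomial.finsetSum_coeff, Polynomial.coeff_C_mul_X_pow, one_mul,
    stirling2_eq_stirlingSecond, sum_ite_eq, mem_Icc, Nat.add_sub_cancel]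
  split_ifs with h
  · rfl
  · rw [Nat.stirlingSecond_eq_zero_of_lt (by omega), Nat.cast_zero, mul_zero]

theorem one_add_X_mul_etaCum_one_succ (n : ℕ) :
    (1 + Λ) * etaCum 1 (n + 1) =
      Λ + Λ * ∑ k ∈ range (n + 1), (n.choose k : ℚ[X]) * etaCum 1 (k + 1) := by
  ext (_ | j)
  · simp [coeff_etaCum_zero]
  simp only [add_mul, one_mul, Polynomial.coeff_add, Polynomial.coeff_X_mul,
    Polynomial.coeff_X, Polynomial.finsetSum_coeff, Polynomial.coeff_natCast_mul,
    coeff_etaCum_one_succ]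
  rcases j with _ | i
  · simp [coeff_etaCum_zero, Nat.stirlingSecond_one_right]
  · simp only [coeff_etaCum_one_succ, if_neg (show 1 ≠ i + 2 by omega), zero_add]
    norm_cast
    simp only [mul_left_comm _ (i !), ← mul_sum, Nat.sum_range_choose_mul_stirlingSecond_succ,
      Nat.factorial_succ]
    ring

noncomputable def etaBarEgf : ℚ[X]⟦X⟧ := egf fun n => etaBar 1 (n + 1)

noncomputable def gammaBarEgf : ℚ[X]⟦X⟧ := egf fun n => gammaBar 1 (n + 1)

theorem egf_etaCum_one_mul :
    (egf fun n => etaCum 1 (n + 1)) * (C (1 + Λ) - C Λ * exp ℚ[X]) = C Λ * exp ℚ[X] := by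
  calc _ = C (1 + Λ) * (egf fun n => etaCum 1 (n + 1)) -
        C Λ * ((egf fun n => etaCum 1 (n + 1)) * exp ℚ[X]) := by ring
    _ = C Λ * exp ℚ[X] := by
      ext n : 1
      simp only [egf_mul_exp, map_sub, coeff_C_mul, coeff_egf, coeff_exp, one_div]
      linear_combination algebraMap ℚ ℚ[X] (n ! : ℚ)⁻¹ * one_add_X_mul_etaCum_one_succ n

theorem etaBarEgf_eq_C_two_mul_rescale :
    etaBarEgf = C 2 * rescale 2 (egf fun n => etaCum 1 (n + 1)) := by
  ext n : 1
  rw [etaBarEgf, coeff_C_mul, coeff_rescale, coeff_egf, coeff_egf, etaBar, div_one, map_pow,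
    map_ofNat]
  ring

theorem etaBarEgf_mul :
    etaBarEgf * (C (1 + Λ) - C Λ * exp ℚ[X] ^ 2) = C (2 * Λ) * exp ℚ[X] ^ 2 := by
  have hexp : exp ℚ[X] ^ 2 = rescale 2 (exp ℚ[X]) := by rw [exp_pow_eq_rescale_exp, Nat.cast_ofNat]
  calc _ = C 2 * rescale 2 ((egf fun n => etaCum 1 (n + 1)) * (C (1 + Λ) - C Λ * exp ℚ[X])) := by
        rw [etaBarEgf_eq_C_two_mul_rescale, hexp, map_mul, map_sub, map_mul, rescale_C, rescale_C]
        ring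
    _ = C (2 * Λ) * exp ℚ[X] ^ 2 := by
        rw [egf_etaCum_one_mul, map_mul, rescale_C, hexp, map_mul]
        ring

theorem coeff_gammaBarEgf_zero : coeff 0 gammaBarEgf = 2 * Λ := by
  rw [gammaBarEgf, coeff_egf, gammaBar, gammaCum, if_pos rfl]
  simp only [Nat.factorial_zero, Nat.cast_one, inv_one, map_one, one_mul, div_one]
  rw [zero_add, pow_one, map_ofNat]

theorem coeff_gammaBarEgf_succ (n : ℕ) :
    coeff (n + 1) gammaBarEgf = 2 ^ (n + 2) * Λ * (1 + Λ) * (Polynomial.C (1 / 2) + Λ) ^ n := by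
  rw [gammaBarEgf, coeff_egf, gammaBar, gammaCum, if_neg (by omega), Nat.add_sub_cancel,
    show n + 1 + 1 - 2 = n by omega, Polynomial.algebraMap_eq]
  calc _ = Polynomial.C (((n + 1)! : ℚ)⁻¹ * (2 ^ (n + 1 + 1) / 1) * ((n + 1)! * 1)) *
        (Λ * (1 + Λ) * (Polynomial.C (1 / 2) + Λ) ^ n) := by
        simp only [map_mul]
        ring
    _ = _ := by
        rw [show ((n + 1)! : ℚ)⁻¹ * (2 ^ (n + 1 + 1) / 1) * ((n + 1)! * 1) = 2 ^ (n + 2) by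
          field_simp, map_pow, map_ofNat]
        ring

theorem gammaBarEgf_mul : gammaBarEgf * (1 - C (1 + 2 * Λ) * X) = C (2 * Λ) * (1 + X) := by
  have half : 2 * (Polynomial.C (1 / 2 : ℚ) + Λ) = 1 + 2 * Λ := by
    rw [mul_add, ← map_ofNat Polynomial.C 2, ← Polynomial.C_mul]
    norm_num
  rw [show gammaBarEgf * (1 - C (1 + 2 * Λ) * X) = gammaBarEgf - C (1 + 2 * Λ) * (gammaBarEgf * X)
    by ring]
  ext (_ | _ | n) : 1
  · rw [map_sub, coeff_C_mul, coeff_zero_mul_X, coeff_C_mul, map_add, coeff_one, coeff_zero_X,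
      coeff_gammaBarEgf_zero]
    simp
  · rw [map_sub, coeff_C_mul, coeff_succ_mul_X, coeff_C_mul, map_add, coeff_one, coeff_one_X,
      coeff_gammaBarEgf_zero, coeff_gammaBarEgf_succ]
    simp only [one_ne_zero, if_false, zero_add, pow_zero, mul_one]
    ring
  · rw [map_sub, coeff_C_mul, coeff_succ_mul_X, coeff_C_mul, map_add, coeff_one, coeff_X,
      coeff_gammaBarEgf_succ, coeff_gammaBarEgf_succ]
    simp only [Nat.add_one_ne_zero, if_false, zero_add, pow_succ,
      show n + 1 + 1 ≠ 1 by omega, mul_zero]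
    linear_combination ((2 : ℚ[X]) ^ (n + 2) * Λ * (1 + Λ) * (Polynomial.C (1 / 2) + Λ) ^ n) * half

local notation "tanhPoly" => map (algebraMap ℚ ℚ[X]) tanhS

local notation "arctanhPoly" => map (algebraMap ℚ ℚ[X]) arctanhS

theorem constantCoeff_tanhPoly : constantCoeff tanhPoly = 0 := by
  rw [constantCoeff_map, constantCoeff_tanhS, map_zero]

theorem hasSubst_tanhPoly : HasSubst tanhPoly :=
  HasSubst.of_constantCoeff_zero' constantCoeff_tanhPoly

theorem hasSubst_arctanhPoly : HasSubst arctanhPoly :=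
  HasSubst.of_constantCoeff_zero' (by rw [constantCoeff_map, constantCoeff_arctanhS, map_zero])

theorem etaBarEgf_mul_tanhPoly :
    etaBarEgf * (1 - C (1 + 2 * Λ) * tanhPoly) = C (2 * Λ) * (1 + tanhPoly) := by
  have hT : tanhPoly * (1 + exp ℚ[X] ^ 2) = exp ℚ[X] ^ 2 - 1 := by
    simpa [map_exp] using congrArg (map (algebraMap ℚ ℚ[X])) tanhS_mul_one_add_exp_sq
  have hH := etaBarEgf_mul
  refine isUnit_one_add_exp_sq.mul_left_inj.mp ?_
  simp only [map_add, map_mul, map_one, map_ofNat] at hH ⊢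
  linear_combination 2 * hH - (etaBarEgf * (1 + 2 * C Λ) + 2 * C Λ) * hT

theorem etaBarEgf_eq_subst_tanhPoly : etaBarEgf = gammaBarEgf.subst tanhPoly := by
  have hu : IsUnit (1 - C (1 + 2 * Λ) * tanhPoly) := by
    rw [isUnit_iff_constantCoeff, map_sub, map_one, map_mul, constantCoeff_tanhPoly, mul_zero,
      sub_zero]
    exact isUnit_one
  refine hu.mul_left_inj.mp ?_
  have h := congrArg (substAlgHom hasSubst_tanhPoly) gammaBarEgf_mul
  simp only [map_mul (substAlgHom _), map_sub, map_add (substAlgHom _), map_one, substAlgHom_X,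
    coe_substAlgHom, subst_C] at h
  rw [etaBarEgf_mul_tanhPoly]
  exact h.symm

theorem tanhPoly_subst_arctanhPoly : subst arctanhPoly tanhPoly = X := by
  have h := map_subst (h := algebraMap ℚ ℚ[X])
    (HasSubst.of_constantCoeff_zero' constantCoeff_arctanhS) tanhS
  rw [tanhS_subst_arctanhS] at h
  exact h.symm.trans (map_X _)

theorem gammaBarEgf_eq_subst_arctanhPoly : gammaBarEgf = etaBarEgf.subst arctanhPoly := by
  rw [etaBarEgf_eq_subst_tanhPoly, subst_comp_subst_apply hasSubst_tanhPoly hasSubst_arctanhPoly,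
    tanhPoly_subst_arctanhPoly, X_subst]

end Cumulants

/-- For a matched pair, the scaled cumulants are related by the reciprocal linear
combinations η̄(n+1) = ∑_{i=0}^{n} Θ(n,i) γ̄(i+1) and γ̄(n+1) = ∑_{i=0}^{n} θ(n,i) η̄(i+1),
as identities of polynomials in λ. -/
theorem cumulants_reciprocal (r : ℚ) (hr : 0 < r) (n : ℕ) :
    etaBar r (n + 1) =
        ∑ i ∈ Finset.range (n + 1), Polynomial.C (ThetaT n i) * gammaBar r (i + 1) ∧
    gammaBar r (n + 1) =
        ∑ i ∈ Finset.range (n + 1), Polynomial.C (thetaA n i) * etaBar r (i + 1) := by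
  simp only [etaBar_eq_etaBar_one hr.ne', gammaBar_eq_gammaBar_one hr.ne']
  exact ⟨eq_sum_of_egf_eq_subst constantCoeff_tanhS etaBarEgf_eq_subst_tanhPoly n,
    eq_sum_of_egf_eq_subst constantCoeff_arctanhS gammaBarEgf_eq_subst_arctanhPoly n⟩
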